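/- For every iteration index t ≥ 1, the probability (over the algorithm's randomness) of the event that T̂_i^{(k)} lies in the interval [(1−ε)·E_i[min(T_i, θ^{(k)})], (1+ε)·E_i[min(T_i, θ^{(k)})]] simultaneously for all k = 1, …, t is at least 1 − α. -/

import Mathlib

/-!
`T̂^{(k)}` is the mean of `N^{(k)}` independent copies of `min(T_i, 2^k) ∈ [0, 2^k]`, so the
multiplicative Chernoff bound makes it `ε`-accurate except with probability
`2 exp(-N^{(k)} E_i[min(T_i, 2^k)] ε² / (3 · 2^k))`. The sample size `N^{(k+1)}` is a function of
the paths of iterations `≤ k` only, hence independent of the paths of iteration `k + 1`, and when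
`T̂^{(k)}` is accurate it is large enough to push that probability below `α / 2^{k+2}`; `N^{(1)}`
does the same with `α / 4`. Splitting the failure event according to the first inaccurate
iteration bounds its probability by `α / 4 + Σ_k α / 2^{k+2} ≤ α / 2`.
-/

open MeasureTheory ProbabilityTheory Finset Set
open scoped ENNReal NNReal Classical

namespace LocalStationary

noncomputable section

/-- First return time (≥ 1) of a trajectory `f` to the state `i`, valued in `ℕ∞`
(it equals `⊤` if the trajectory never returns to `i`). -/
def hit {S : Type*} (i : S) (f : ℕ → S) : ℕ∞ :=
  sInf {n : ℕ∞ | ∃ m : ℕ, n = m ∧ 1 ≤ m ∧ f m = i}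

/-- Truncated return time `min(T_i, θ)` as a natural number. -/
def truncHit {S : Type*} (i : S) (θ : ℕ) (f : ℕ → S) : ℕ :=
  (min (hit i f) (θ : ℕ∞)).toNat

/-- Number of visits to `j` among the first `min(T_i, θ)` steps of the trajectory. -/
def visits {S : Type*} (i j : S) (θ : ℕ) (f : ℕ → S) : ℕ :=
  ((Finset.Icc 1 (truncHit i θ f)).filter fun s => f s = j).card

/-- A discrete-time time-homogeneous Markov chain on a state space `S`, described by
the laws `μ x` of its trajectories started at each state `x`, together with its
transition matrix `trans`. -/
structure Chain (S : Type*) [MeasurableSpace S] where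
  μ : S → Measure (ℕ → S)
  isProb : ∀ x, IsProbabilityMeasure (μ x)
  start : ∀ x, μ x {f | f 0 = x} = 1
  trans : S → S → ℝ≥0∞
  trans_sum : ∀ x, ∑' y, trans x y = 1
  markov : ∀ x (n : ℕ) (s : ℕ → S),
    μ x {f | ∀ k ≤ n + 1, f k = s k} =
      μ x {f | ∀ k ≤ n, f k = s k} * trans (s n) (s (n + 1))

namespace Chain

variable {S : Type*} [MeasurableSpace S]

/-- Irreducibility: from every state one can reach every other state. -/
def Irreducible (C : Chain S) : Prop :=
  ∀ x y : S, ∃ n : ℕ, 0 < C.μ x {f | f n = y}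

/-- Positive recurrence: the return time to each state is almost surely finite and
has finite expectation. -/
def PositiveRecurrent (C : Chain S) : Prop :=
  ∀ x : S, C.μ x {f | hit x f = ⊤} = 0 ∧
    Integrable (fun f => ((hit x f).toNat : ℝ)) (C.μ x)

/-- Aperiodicity: for each state, the only common divisor of the possible return
times is `1`. -/
def Aperiodic (C : Chain S) : Prop :=
  ∀ x : S, ∀ d : ℕ, (∀ n : ℕ, 1 ≤ n → 0 < C.μ x {f | f n = x} → d ∣ n) → d ∣ 1

/-- `E_x[T_i]`, the expected hitting time of `i` starting from `x`. -/
def ERet (C : Chain S) (x i : S) : ℝ :=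
  ∫ f, ((hit i f).toNat : ℝ) ∂ C.μ x

/-- The stationary probability `π_i = 1 / E_i[T_i]`. -/
def statPi (C : Chain S) (i : S) : ℝ := (C.ERet i i)⁻¹

/-- The truncated mean `E_i[min(T_i, θ)]`. -/
def EThat (C : Chain S) (i : S) (θ : ℕ) : ℝ :=
  ∫ f, (truncHit i θ f : ℝ) ∂ C.μ i

/-- `E_i[F̂_j] = E_i[Σ_{s=1}^{min(T_i,θ)} 1{X_s = j}]`. -/
def EVisits (C : Chain S) (i j : S) (θ : ℕ) : ℝ :=
  ∫ f, (visits i j θ f : ℝ) ∂ C.μ i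

/-- `P_i(T_i > k)`, as a real number. -/
def tailP (C : Chain S) (i : S) (k : ℕ) : ℝ :=
  (C.μ i {f | (k : ℕ∞) < hit i f}).toReal

/-- The maximal hitting time `H_i = max_x E_x[T_i]`. -/
def maxHit (C : Chain S) (i : S) : ℝ := ⨆ x : S, C.ERet x i

/-- Entry `Z_{jk} = Σ_{t=0}^∞ (P^{(t)}_{jk} − π_k)` of the fundamental matrix. -/
def Zfun (C : Chain S) (j k : S) : ℝ :=
  ∑' t : ℕ, ((C.μ j {f | f t = k}).toReal - C.statPi k)

/-- `Z_max(i) = max_k |Z_{ki}|`. -/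
def Zmax (C : Chain S) (i : S) : ℝ := ⨆ k : S, |C.Zfun k i|

end Chain


/-- The randomness of the local algorithm with anchor node `i` and parameters `ε`, `α`,
run on the chain `C`: a probability space carrying, for every iteration `t` and sample
index `k`, an independent sample trajectory `path t k` of the chain started at `i`,
together with the sample numbers `N^{(t)}`, empirical truncated return times `T̂^{(t)}`
and truncated fractions `p̂^{(t)}`, with `θ^{(t)} = 2^t`. -/
structure Algo {S : Type*} [MeasurableSpace S] (C : Chain S) (i : S) (ε α : ℝ)
    (Ω : Type*) [MeasurableSpace Ω] where
  vol : Measure Ω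
  isProb : IsProbabilityMeasure vol
  path : ℕ → ℕ → Ω → (ℕ → S)
  meas_path : ∀ t k, Measurable (path t k)
  law_path : ∀ t k, vol.map (path t k) = C.μ i
  indep_path : iIndepFun (fun p : ℕ × ℕ => path p.1 p.2) vol
  Nsamp : ℕ → Ω → ℕ
  That : ℕ → Ω → ℝ
  phat : ℕ → Ω → ℝ
  hThat : ∀ t ω, That t ω =
    (Nsamp t ω : ℝ)⁻¹ * ∑ k ∈ Finset.range (Nsamp t ω), (truncHit i (2 ^ t) (path t k ω) : ℝ)
  hphat : ∀ t ω, phat t ω = (Nsamp t ω : ℝ)⁻¹ *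
    ∑ k ∈ Finset.range (Nsamp t ω),
      (if ((2 ^ t : ℕ) : ℕ∞) < hit i (path t k ω) then (1 : ℝ) else 0)
  hN1 : ∀ ω, Nsamp 1 ω = ⌈6 * (1 + ε) * Real.log (8 / α) / ε ^ 2⌉₊
  hNsucc : ∀ t ω, 1 ≤ t → Nsamp (t + 1) ω =
    ⌈3 * (1 + ε) * (2 ^ (t + 1) : ℝ) * Real.log (4 * (2 ^ (t + 1) : ℝ) / α) /
      (That t ω * ε ^ 2)⌉₊

namespace Algo

variable {S : Type*} [MeasurableSpace S] {C : Chain S} {i : S} {ε α : ℝ}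
  {Ω : Type*} [MeasurableSpace Ω]

/-- The estimate `F̂_j^{(t)}` of the visit frequency to an observer node `j`. -/
def Fhat (A : Algo C i ε α Ω) (j : S) (t : ℕ) (ω : Ω) : ℝ :=
  (A.Nsamp t ω : ℝ)⁻¹ *
    ∑ k ∈ Finset.range (A.Nsamp t ω), (visits i j (2 ^ t) (A.path t k ω) : ℝ)

/-- Termination condition at iteration `t`: (a) `π̂^{(t)} < Δ/(1+ε)`, or
(b) `p̂^{(t)} π̂^{(t)} < εΔ`, where `π̂^{(t)} = 1/T̂^{(t)}`. -/
def stops (A : Algo C i ε α Ω) (Δ : ℝ) (t : ℕ) (ω : Ω) : Prop :=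
  (A.That t ω)⁻¹ < Δ / (1 + ε) ∨ A.phat t ω * (A.That t ω)⁻¹ < ε * Δ

/-- The terminal iteration `t_max` of the algorithm. -/
def tmax (A : Algo C i ε α Ω) (Δ : ℝ) (ω : Ω) : ℕ :=
  sInf {t : ℕ | 1 ≤ t ∧ A.stops Δ t ω}

end Algo

end

end LocalStationary

open Real

namespace Real

lemma exp_sub_one_sub_le_of_abs_le {u : ℝ} (hu : |u| ≤ 2 / 3) :
    exp u - 1 - u ≤ 3 / 4 * u ^ 2 := by
  have h := Real.exp_bound (x := u) (by linarith) (n := 3) (by norm_num)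
  norm_num [Finset.sum_range_succ, Nat.factorial] at h
  have hcube : |u| ^ 3 ≤ 2 / 3 * u ^ 2 := by
    rw [pow_succ, ← sq_abs u]
    exact (mul_le_mul_of_nonneg_left hu (sq_nonneg _)).trans_eq (by ring)
  linarith [(abs_le.mp h).2, sq_nonneg u]

lemma exp_mul_le_chord {x b t : ℝ} (hb : 0 < b) (hx₀ : 0 ≤ x) (hxb : x ≤ b) :
    exp (t * x) ≤ 1 + x * (exp (t * b) - 1) / b := by
  have h := convexOn_exp.2 (Set.mem_univ (t * b)) (Set.mem_univ 0) (div_nonneg hx₀ hb.le)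
    (sub_nonneg.2 ((div_le_one hb).2 hxb)) (add_sub_cancel _ _)
  simp only [smul_eq_mul, mul_zero, add_zero, exp_zero, mul_one] at h
  calc exp (t * x) = exp (x / b * (t * b)) := by field_simp
    _ ≤ x / b * exp (t * b) + (1 - x / b) := h
    _ = _ := by field_simp; ring

end Real

lemma Measurable.comp_nat_index {Ω β : Type*} {mΩ : MeasurableSpace Ω} [MeasurableSpace β]
    {N : Ω → ℕ} {F : ℕ → Ω → β} (hN : Measurable N) (hF : ∀ n, Measurable (F n)) :
    Measurable fun ω => F (N ω) ω :=
  (measurable_from_prod_countable_left (f := fun p : Ω × ℕ => F p.2 p.1) hF).comp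
    (measurable_id.prodMk hN)

namespace ProbabilityTheory

/-- The exponent of the Chernoff bound at `t = σ · 2ε/(3b)` for a sum of mean `a` of variables
with values in `[0, b]`: `σ = 1` gives the upper tail, `σ = -1` the lower one. -/
lemma chernoff_exponent_le {a b ε σ : ℝ} (ha : 0 ≤ a) (hb : 0 < b) (hε₀ : 0 ≤ ε)
    (hε₁ : ε ≤ 1) (hσ : σ ^ 2 = 1) :
    -(σ * (2 * ε / 3) / b) * ((1 + σ * ε) * a) + a * (exp (σ * (2 * ε / 3)) - 1) / b ≤
      -(a * ε ^ 2) / (3 * b) := by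
  set u := σ * (2 * ε / 3)
  have hu2 : u ^ 2 = 4 / 9 * ε ^ 2 := by simp only [u]; linear_combination (4 / 9 * ε ^ 2) * hσ
  have hu : |u| ≤ 2 / 3 := abs_le_of_sq_le_sq (by nlinarith) (by norm_num)
  have hexp := mul_le_mul_of_nonneg_left (exp_sub_one_sub_le_of_abs_le hu) (div_nonneg ha hb.le)
  have hσu : σ * ε * u = 2 / 3 * ε ^ 2 := by
    simp only [u]; linear_combination (2 / 3 * ε ^ 2) * hσ
  calc _ = a / b * (exp u - 1 - u) - a / b * (σ * ε * u) := by field_simp; ring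
    _ ≤ a / b * (3 / 4 * u ^ 2) - a / b * (2 / 3 * ε ^ 2) := by rw [hσu]; linarith
    _ = _ := by rw [hu2]; field_simp; ring

variable {Ω ι : Type*} {mΩ : MeasurableSpace Ω} {μ : Measure Ω} [IsProbabilityMeasure μ]

lemma Indep.measure_mem_at_index_le {m₁ m₂ : MeasurableSpace Ω} (hm₁ : m₁ ≤ mΩ)
    (hind : Indep m₁ m₂ μ) {N : Ω → ℕ} (hN : Measurable[m₁] N) {B : ℕ → Set Ω}
    (hB : ∀ n, MeasurableSet[m₂] (B n)) {s : Set ℕ} {δ : ℝ≥0∞} (hδ : ∀ n ∈ s, μ (B n) ≤ δ) :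
    μ {ω | N ω ∈ s ∧ ω ∈ B (N ω)} ≤ δ := by
  set E : ℕ → Set Ω := fun n => N ⁻¹' ({n} ∩ s)
  have hE : ∀ n, MeasurableSet[m₁] (E n) := fun n => hN .of_discrete
  have hdisj : Pairwise fun n n' => Disjoint (E n) (E n') := fun n n' hnn' =>
    Set.disjoint_left.2 fun ω h h' => hnn' (h.1.symm.trans h'.1)
  calc μ {ω | N ω ∈ s ∧ ω ∈ B (N ω)} = μ (⋃ n, E n ∩ B n) := by
        congr 1; ext ω; simp [E, and_assoc]
    _ ≤ ∑' n, μ (E n ∩ B n) := measure_iUnion_le _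
    _ = ∑' n, μ (E n) * μ (B n) := by
        congr with n; exact (Indep_iff _ _ _).1 hind _ _ (hE n) (hB n)
    _ ≤ ∑' n, μ (E n) * δ := by
        refine ENNReal.tsum_le_tsum fun n => ?_
        by_cases hn : n ∈ s
        · gcongr; exact hδ n hn
        · simp only [E, Set.singleton_inter_eq_empty.2 hn, Set.preimage_empty, measure_empty,
            zero_mul, le_refl]
    _ = μ (⋃ n, E n) * δ := by
        rw [ENNReal.tsum_mul_right, measure_iUnion hdisj fun n => hm₁ _ (hE n)]
    _ ≤ δ := mul_le_of_le_one_left' prob_le_one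

variable {b : ℝ}

lemma mgf_le_exp_of_mem_Icc {X : Ω → ℝ} (hX : Measurable X) (hb : 0 < b)
    (hXb : ∀ ω, X ω ∈ Icc 0 b) (t : ℝ) :
    mgf X μ t ≤ exp (μ[X] * (exp (t * b) - 1) / b) := by
  have hint : Integrable X μ := .of_mem_Icc 0 b hX.aemeasurable (ae_of_all _ hXb)
  calc mgf X μ t ≤ ∫ ω, (1 + X ω * (exp (t * b) - 1) / b) ∂μ :=
        integral_mono (integrable_exp_mul_of_mem_Icc hX.aemeasurable (ae_of_all _ hXb))
          ((integrable_const 1).add ((hint.mul_const _).div_const _))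
          fun ω => exp_mul_le_chord hb (hXb ω).1 (hXb ω).2
    _ = 1 + μ[X] * (exp (t * b) - 1) / b := by
        rw [integral_add (integrable_const 1) ((hint.mul_const _).div_const _),
          integral_div, integral_mul_const]
        simp
    _ ≤ _ := by linarith [add_one_le_exp (μ[X] * (exp (t * b) - 1) / b)]

variable {X : ι → Ω → ℝ} {m : ℝ}

lemma iIndepFun.mgf_sum_le (hind : iIndepFun X μ) (hX : ∀ k, Measurable (X k)) (hb : 0 < b)
    (hXb : ∀ k ω, X k ω ∈ Icc 0 b) (hm : ∀ k, μ[X k] = m) (s : Finset ι) (t : ℝ) :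
    mgf (∑ k ∈ s, X k) μ t ≤ exp (#s * m * (exp (t * b) - 1) / b) := by
  rw [hind.mgf_sum hX, mul_assoc, mul_div_assoc, exp_nat_mul, ← prod_const]
  refine prod_le_prod (fun _ _ => mgf_nonneg) fun k _ => ?_
  rw [← hm k]
  exact mgf_le_exp_of_mem_Icc (hX k) hb (hXb k) t

theorem iIndepFun.measure_sum_notMem_Icc_le (hind : iIndepFun X μ)
    (hX : ∀ k, Measurable (X k)) (hb : 0 < b) (hXb : ∀ k ω, X k ω ∈ Icc 0 b)
    (hm : ∀ k, μ[X k] = m) (s : Finset ι) {ε : ℝ} (hε₀ : 0 ≤ ε) (hε₁ : ε ≤ 1) :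
    μ {ω | ∑ k ∈ s, X k ω ∉ Icc ((1 - ε) * (#s * m)) ((1 + ε) * (#s * m))} ≤
      ENNReal.ofReal (2 * exp (-(#s * m * ε ^ 2) / (3 * b))) := by
  set a : ℝ := #s * m
  have ha : 0 ≤ a := by
    have : a = ∑ k ∈ s, μ[X k] := by simp [a, hm]
    exact this ▸ sum_nonneg fun k _ => integral_nonneg fun ω => (hXb k ω).1
  have hint : ∀ t, Integrable (fun ω => exp (t * (∑ k ∈ s, X k) ω)) μ := fun t =>
    integrable_exp_mul_of_mem_Icc (b := #s * b) (by fun_prop) (ae_of_all _ fun ω => by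
      simp only [Finset.sum_apply]
      exact ⟨sum_nonneg fun k _ => (hXb k ω).1,
        (sum_le_sum fun k _ => (hXb k ω).2).trans_eq (by simp)⟩)
  have tail : ∀ σ : ℝ, σ ^ 2 = 1 →
      exp (-(σ * (2 * ε / 3) / b) * ((1 + σ * ε) * a)) *
        mgf (∑ k ∈ s, X k) μ (σ * (2 * ε / 3) / b) ≤ exp (-(a * ε ^ 2) / (3 * b)) := by
    intro σ hσ
    calc _ ≤ exp (-(σ * (2 * ε / 3) / b) * ((1 + σ * ε) * a)) *
          exp (a * (exp (σ * (2 * ε / 3) / b * b) - 1) / b) := by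
          gcongr; exact hind.mgf_sum_le hX hb hXb hm s _
      _ ≤ _ := by
          rw [← exp_add, div_mul_cancel₀ _ hb.ne', exp_le_exp]
          exact chernoff_exponent_le ha hb hε₀ hε₁ hσ
  have upper := (measure_ge_le_exp_mul_mgf ((1 + 1 * ε) * a) (by positivity) (hint _)).trans
    (tail 1 (one_pow 2))
  have lower := (measure_le_le_exp_mul_mgf ((1 + -1 * ε) * a)
    (div_nonpos_of_nonpos_of_nonneg (by linarith) hb.le) (hint _)).trans (tail (-1) (by norm_num))
  simp only [one_mul, neg_one_mul, ← sub_eq_add_neg, Finset.sum_apply] at upper lower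
  calc _ ≤ μ ({ω | ∑ k ∈ s, X k ω ≤ (1 - ε) * a} ∪ {ω | (1 + ε) * a ≤ ∑ k ∈ s, X k ω}) := by
        refine measure_mono fun ω hω => ?_
        by_contra hc
        simp only [Set.mem_union, Set.mem_ofPred, not_or, not_le] at hc
        exact hω ⟨hc.1.le, hc.2.le⟩
    _ ≤ _ := measure_union_le _ _
    _ ≤ _ := by
        rw [two_mul, ENNReal.ofReal_add (exp_pos _).le (exp_pos _).le, ← ofReal_measureReal,
          ← ofReal_measureReal]
        exact add_le_add (ENNReal.ofReal_le_ofReal lower) (ENNReal.ofReal_le_ofReal upper)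

end ProbabilityTheory

namespace LocalStationary

noncomputable section

section TruncHit

variable {S : Type*}

lemma coe_lt_hit_iff {i : S} {f : ℕ → S} {m : ℕ} : (m : ℕ∞) < hit i f ↔ ∀ j, 1 ≤ j → j ≤ m → f j ≠ i := by
  rw [← ENat.add_one_le_iff (ENat.natCast_ne_top m), hit, le_sInf_iff]
  constructor
  · intro h j hj hjm hfj
    have := h j ⟨j, rfl, hj, hfj⟩
    norm_cast at this
    omega
  · rintro h _ ⟨j, rfl, hj, hfj⟩
    by_contra hc
    norm_cast at hc
    exact h j hj (by omega) hfj

lemma truncHit_eq_card (i : S) (θ : ℕ) (f : ℕ → S) :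
    truncHit i θ f = #((Finset.range θ).filter fun m : ℕ => (m : ℕ∞) < hit i f) := by
  have hfin : min (hit i f) θ ≠ ⊤ := ne_top_of_le_ne_top (ENat.natCast_ne_top θ) (min_le_right _ _)
  suffices h : (Finset.range θ).filter (fun m : ℕ => (m : ℕ∞) < hit i f) = Finset.range (truncHit i θ f) by
    rw [h, card_range]
  ext m
  rw [mem_filter, Finset.mem_range, Finset.mem_range, truncHit]
  conv_rhs => rw [← ENat.natCast_lt_natCast, ENat.natCast_toNat hfin, lt_min_iff]
  rw [ENat.natCast_lt_natCast, and_comm]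


lemma truncHit_le (i : S) (θ : ℕ) (f : ℕ → S) : truncHit i θ f ≤ θ := by
  rw [truncHit_eq_card]
  exact (card_filter_le _ _).trans_eq (card_range θ)

lemma one_le_truncHit (i : S) {θ : ℕ} (hθ : 1 ≤ θ) (f : ℕ → S) : 1 ≤ truncHit i θ f := by
  rw [truncHit_eq_card]
  exact card_pos.2 ⟨0, mem_filter.2 ⟨Finset.mem_range.2 hθ, coe_lt_hit_iff.2 fun j hj hj0 => by omega⟩⟩

lemma truncHit_mono (i : S) {θ θ' : ℕ} (h : θ ≤ θ') (f : ℕ → S) :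
    truncHit i θ f ≤ truncHit i θ' f := by
  simp only [truncHit_eq_card]
  exact card_le_card (filter_subset_filter _ (range_subset_range.2 h))

lemma measurable_truncHit [MeasurableSpace S] [MeasurableSingletonClass S] (i : S) (θ : ℕ) :
    Measurable fun f : ℕ → S => (truncHit i θ f : ℝ) := by
  simp only [truncHit_eq_card, card_filter, Nat.cast_sum, Nat.cast_ite, Nat.cast_one,
    Nat.cast_zero]
  refine Finset.measurable_sum _ fun m _ => Measurable.ite ?_ measurable_const measurable_const
  simp only [coe_lt_hit_iff, Set.ofPred_forall]
  exact .iInter fun j => .iInter fun _ => .iInter fun _ =>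
    ((measurableSet_singleton i).preimage (measurable_pi_apply j)).compl

namespace Chain

variable [MeasurableSpace S] [MeasurableSingletonClass S] (C : Chain S) (i : S)

lemma integrable_truncHit (θ : ℕ) : Integrable (fun f => (truncHit i θ f : ℝ)) (C.μ i) :=
  have := C.isProb i
  .of_mem_Icc 0 θ (measurable_truncHit i θ).aemeasurable
    (ae_of_all _ fun f => ⟨by positivity, by exact_mod_cast truncHit_le i θ f⟩)

lemma one_le_EThat {θ : ℕ} (hθ : 1 ≤ θ) : 1 ≤ C.EThat i θ := by
  have := C.isProb i
  calc (1 : ℝ) = ∫ _, (1 : ℝ) ∂C.μ i := by simp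
    _ ≤ C.EThat i θ := integral_mono (integrable_const 1) (C.integrable_truncHit i θ)
      fun f => Nat.one_le_cast.2 (one_le_truncHit i hθ f)

lemma EThat_mono {θ θ' : ℕ} (h : θ ≤ θ') : C.EThat i θ ≤ C.EThat i θ' :=
  integral_mono (C.integrable_truncHit i θ) (C.integrable_truncHit i θ')
    fun f => Nat.cast_le.2 (truncHit_mono i h f)

end Chain

end TruncHit


namespace Algo

variable {S : Type*} [MeasurableSpace S] {C : Chain S} {i : S} {ε α : ℝ} {Ω : Type*}
  [MeasurableSpace Ω] (A : Algo C i ε α Ω)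

def sample (t k : ℕ) (ω : Ω) : ℝ := truncHit i (2 ^ t) (A.path t k ω)

abbrev pathsUpTo (t : ℕ) : MeasurableSpace Ω :=
  ⨆ p ∈ {p : ℕ × ℕ | p.1 ≤ t}, MeasurableSpace.comap (A.path p.1 p.2) inferInstance

abbrev pathsAt (t : ℕ) : MeasurableSpace Ω :=
  ⨆ p ∈ {p : ℕ × ℕ | p.1 = t}, MeasurableSpace.comap (A.path p.1 p.2) inferInstance

lemma pathsUpTo_le (t : ℕ) : A.pathsUpTo t ≤ ‹MeasurableSpace Ω› :=
  iSup₂_le fun p _ => (A.meas_path p.1 p.2).comap_le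

lemma pathsUpTo_mono : Monotone A.pathsUpTo := fun _ _ h =>
  biSup_mono fun _ hp => le_trans hp h

lemma measurable_path_pathsUpTo {t k j : ℕ} (h : k ≤ t) :
    Measurable[A.pathsUpTo t] (A.path k j) :=
  Measurable.of_comap_le (le_iSup₂ (f := fun (p : ℕ × ℕ) (_ : p ∈ {p : ℕ × ℕ | p.1 ≤ t}) =>
    MeasurableSpace.comap (A.path p.1 p.2) inferInstance) (k, j) h)

lemma measurable_path_pathsAt (t k : ℕ) : Measurable[A.pathsAt t] (A.path t k) :=
  Measurable.of_comap_le (le_iSup₂ (f := fun (p : ℕ × ℕ) (_ : p ∈ {p : ℕ × ℕ | p.1 = t}) =>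
    MeasurableSpace.comap (A.path p.1 p.2) inferInstance) (t, k) rfl)

lemma indep_pathsUpTo_pathsAt {s t : ℕ} (h : s < t) :
    Indep (A.pathsUpTo s) (A.pathsAt t) A.vol :=
  indep_iSup_of_disjoint (m := fun p : ℕ × ℕ => MeasurableSpace.comap (A.path p.1 p.2) inferInstance)
    (fun p => (A.meas_path p.1 p.2).comap_le) ((iIndepFun_iff_iIndep _ _ _).1 A.indep_path)
    (S := {p | p.1 ≤ s}) (T := {p | p.1 = t})
    (Set.disjoint_left.2 fun p (hp : p.1 ≤ s) (hp' : p.1 = t) => by omega)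

lemma That_eq (t : ℕ) (ω : Ω) : A.That t ω =
    (A.Nsamp t ω : ℝ)⁻¹ * ∑ k ∈ Finset.range (A.Nsamp t ω), A.sample t k ω :=
  A.hThat t ω

def accurate (k : ℕ) : Set Ω :=
  {ω | A.That k ω ∈ Icc ((1 - ε) * C.EThat i (2 ^ k)) ((1 + ε) * C.EThat i (2 ^ k))}

def deviation (t n : ℕ) : Set Ω :=
  {ω | ∑ k ∈ Finset.range n, A.sample t k ω ∉
    Icc ((1 - ε) * (n * C.EThat i (2 ^ t))) ((1 + ε) * (n * C.EThat i (2 ^ t)))}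

lemma mem_deviation_of_notMem_accurate {t : ℕ} {ω : Ω} (hN : 0 < A.Nsamp t ω)
    (h : ω ∉ A.accurate t) : ω ∈ A.deviation t (A.Nsamp t ω) := by
  intro hmem
  have hN' : (0 : ℝ) < A.Nsamp t ω := by exact_mod_cast hN
  refine h ⟨?_, ?_⟩ <;> rw [A.That_eq]
  · rw [le_inv_mul_iff₀ hN']; linarith [hmem.1]
  · rw [inv_mul_le_iff₀ hN']; linarith [hmem.2]

variable [MeasurableSingletonClass S]

lemma measurable_sample (t k : ℕ) : Measurable (A.sample t k) :=
  (measurable_truncHit i (2 ^ t)).comp (A.meas_path t k)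

lemma measurable_sample_pathsUpTo {t s k : ℕ} (h : t ≤ s) :
    Measurable[A.pathsUpTo s] (A.sample t k) :=
  (measurable_truncHit i (2 ^ t)).comp (A.measurable_path_pathsUpTo h)

lemma measurable_sample_pathsAt (t k : ℕ) : Measurable[A.pathsAt t] (A.sample t k) :=
  (measurable_truncHit i (2 ^ t)).comp (A.measurable_path_pathsAt t k)

lemma iIndepFun_sample (t : ℕ) : iIndepFun (A.sample t) A.vol :=
  (A.indep_path.precomp (g := fun k => (t, k)) fun _ _ h => (Prod.ext_iff.1 h).2).comp
    (fun _ f => (truncHit i (2 ^ t) f : ℝ)) fun _ => measurable_truncHit i _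

lemma integral_sample (t k : ℕ) : A.vol[A.sample t k] = C.EThat i (2 ^ t) := by
  rw [Chain.EThat, ← A.law_path t k, integral_map (A.meas_path t k).aemeasurable
    (measurable_truncHit i _).aestronglyMeasurable]
  rfl

lemma measurable_Nsamp_succ : ∀ t, Measurable[A.pathsUpTo t] (A.Nsamp (t + 1))
  | 0 => by
    rw [show A.Nsamp 1 = fun _ => _ from funext A.hN1]
    exact measurable_const
  | t + 1 => by
    have hThat : Measurable[A.pathsUpTo (t + 1)] (A.That (t + 1)) := by
      rw [show A.That (t + 1) = _ from funext (A.That_eq (t + 1))]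
      exact Measurable.comp_nat_index (mΩ := A.pathsUpTo (t + 1))
        (F := fun n ω => (n : ℝ)⁻¹ * ∑ k ∈ Finset.range n, A.sample (t + 1) k ω)
        ((measurable_Nsamp_succ t).mono (A.pathsUpTo_mono t.le_succ) le_rfl)
        fun n => (Finset.measurable_sum _ fun k _ =>
          A.measurable_sample_pathsUpTo le_rfl).const_mul _
    rw [show A.Nsamp (t + 2) = _ from funext fun ω => A.hNsucc (t + 1) ω (by omega)]
    exact Nat.measurable_ceil.comp (measurable_const.div (hThat.mul_const _))

lemma measurableSet_deviation (t n : ℕ) : MeasurableSet[A.pathsAt t] (A.deviation t n) :=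
  ((Finset.measurable_sum _ fun k _ => A.measurable_sample_pathsAt t k)
    measurableSet_Icc).compl

lemma measure_deviation_le (hε : ε ∈ Set.Ioo 0 1) (t n : ℕ) {δ : ℝ} (hδ : 0 < δ)
    (hn : 3 * 2 ^ t * log (2 / δ) / (C.EThat i (2 ^ t) * ε ^ 2) ≤ n) :
    A.vol (A.deviation t n) ≤ ENNReal.ofReal δ := by
  have := A.isProb
  have hμ : 0 < C.EThat i (2 ^ t) := zero_lt_one.trans_le (C.one_le_EThat i Nat.one_le_two_pow)
  have h := (A.iIndepFun_sample t).measure_sum_notMem_Icc_le (b := (2 : ℝ) ^ t)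
    (A.measurable_sample t) (by positivity)
    (fun k ω => ⟨Nat.cast_nonneg _, by unfold sample; exact_mod_cast truncHit_le i (2 ^ t) _⟩)
    (A.integral_sample t) (Finset.range n) hε.1.le hε.2.le
  rw [card_range] at h
  refine h.trans (ENNReal.ofReal_le_ofReal ?_)
  have hlog : log (2 / δ) ≤ n * C.EThat i (2 ^ t) * ε ^ 2 / (3 * 2 ^ t) := by
    rw [div_le_iff₀ (by have := hε.1; positivity)] at hn
    rw [le_div_iff₀ (by positivity)]
    linarith
  calc 2 * exp (-(n * C.EThat i (2 ^ t) * ε ^ 2) / (3 * 2 ^ t)) ≤ 2 * exp (-log (2 / δ)) := by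
        rw [neg_div]; gcongr
    _ = δ := by rw [exp_neg, exp_log (by positivity)]; field_simp

lemma measure_compl_accurate_one_le (hε : ε ∈ Set.Ioo 0 1) (hα : α ∈ Set.Ioo 0 1) :
    A.vol (A.accurate 1)ᶜ ≤ ENNReal.ofReal (α / 4) := by
  have hlog : 0 < log (8 / α) := log_pos (by rw [lt_div_iff₀ hα.1]; linarith [hα.2])
  have hε₀ := hε.1
  have hα₀ := hα.1
  set n₁ := ⌈6 * (1 + ε) * log (8 / α) / ε ^ 2⌉₊
  have hn₁ : 0 < n₁ := Nat.ceil_pos.2 (by positivity)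
  refine (measure_mono fun ω hω => ?_).trans (A.measure_deviation_le hε 1 n₁ (by positivity) ?_)
  · have hN : A.Nsamp 1 ω = n₁ := A.hN1 ω
    rw [← hN]
    exact A.mem_deviation_of_notMem_accurate (by rw [hN]; exact hn₁) hω
  · have hμ := C.one_le_EThat i (θ := 2 ^ 1) (by norm_num)
    rw [show 2 / (α / 4) = 8 / α by field_simp; norm_num]
    calc _ ≤ 3 * 2 ^ 1 * log (8 / α) / ε ^ 2 :=
          div_le_div_of_nonneg_left (by positivity) (by positivity)
            (le_mul_of_one_le_left (sq_nonneg ε) hμ)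
      _ ≤ 6 * (1 + ε) * log (8 / α) / ε ^ 2 := by gcongr ?_ * _ / _; linarith
      _ ≤ n₁ := Nat.le_ceil _

lemma le_Nsamp_succ (hε : ε ∈ Set.Ioo 0 1) (hα : α ∈ Set.Ioo 0 1) {j : ℕ} (hj : 1 ≤ j) {ω : Ω}
    (hω : ω ∈ A.accurate j) :
    3 * 2 ^ (j + 1) * log (2 / (α / 2 ^ (j + 2))) / (C.EThat i (2 ^ (j + 1)) * ε ^ 2) ≤
      A.Nsamp (j + 1) ω := by
  have hε₀ := hε.1
  have hμ := C.one_le_EThat i (Nat.one_le_two_pow (n := j))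
  have hT : 0 < A.That j ω := lt_of_lt_of_le (by nlinarith [hε.2]) hω.1
  have hT' : A.That j ω ≤ (1 + ε) * C.EThat i (2 ^ (j + 1)) :=
    hω.2.trans (mul_le_mul_of_nonneg_left
      (C.EThat_mono i (Nat.pow_le_pow_right two_pos j.le_succ)) (by linarith))
  have hlog : 0 < log (4 * 2 ^ (j + 1) / α) := log_pos (by
    rw [lt_div_iff₀ hα.1]; nlinarith [hα.2, one_le_pow₀ (M₀ := ℝ) (n := j + 1) one_le_two])
  rw [show 2 / (α / 2 ^ (j + 2)) = 4 * 2 ^ (j + 1) / α by field_simp; ring, A.hNsucc j ω hj]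
  refine le_trans ?_ (Nat.le_ceil _)
  calc _ = 3 * (1 + ε) * 2 ^ (j + 1) * log (4 * 2 ^ (j + 1) / α) /
        ((1 + ε) * C.EThat i (2 ^ (j + 1)) * ε ^ 2) := by field_simp
    _ ≤ _ := by gcongr

lemma measure_accurate_inter_compl_accurate_succ_le (hε : ε ∈ Set.Ioo 0 1)
    (hα : α ∈ Set.Ioo 0 1) {j : ℕ} (hj : 1 ≤ j) :
    A.vol (A.accurate j ∩ (A.accurate (j + 1))ᶜ) ≤ ENNReal.ofReal (α / 2 ^ (j + 2)) := by
  have := A.isProb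
  have hε₀ := hε.1
  have hμ := C.one_le_EThat i (Nat.one_le_two_pow (n := j + 1))
  have hδ : α / 2 ^ (j + 2) < 1 :=
    (div_lt_one (by positivity)).2 (hα.2.trans_le (one_le_pow₀ one_le_two))
  have hmin : 0 < 3 * 2 ^ (j + 1) * log (2 / (α / 2 ^ (j + 2))) /
      (C.EThat i (2 ^ (j + 1)) * ε ^ 2) := by
    have : 0 < log (2 / (α / 2 ^ (j + 2))) :=
      log_pos ((one_lt_div (by have := hα.1; positivity)).2 (by linarith))
    positivity
  refine (measure_mono ?_).trans ((A.indep_pathsUpTo_pathsAt (lt_add_one j)).measure_mem_at_index_le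
    (A.pathsUpTo_le j) (A.measurable_Nsamp_succ j) (A.measurableSet_deviation (j + 1))
    fun n hn => A.measure_deviation_le hε (j + 1) n (by have := hα.1; positivity) hn)
  rintro ω ⟨hω, hω'⟩
  have hN := A.le_Nsamp_succ hε hα hj hω
  exact ⟨hN, A.mem_deviation_of_notMem_accurate (by exact_mod_cast hmin.trans_le hN) hω'⟩

lemma measure_compl_forall_accurate_le (hε : ε ∈ Set.Ioo 0 1) (hα : α ∈ Set.Ioo 0 1) :
    ∀ t : ℕ, A.vol {ω | ∀ k, 1 ≤ k → k ≤ t → ω ∈ A.accurate k}ᶜ ≤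
      ENNReal.ofReal (α / 2 - α / 2 ^ (t + 1))
  | 0 => by
    rw [show {ω | ∀ k, 1 ≤ k → k ≤ 0 → ω ∈ A.accurate k} = univ from
      eq_univ_of_forall fun ω k hk hk0 => by omega]
    simp
  | 1 => by
    refine (measure_mono fun ω hω => ?_).trans ((A.measure_compl_accurate_one_le hε hα).trans_eq
      (by congr 1; ring))
    exact fun hacc => hω fun k hk hk1 => (show k = 1 by omega) ▸ hacc
  | t + 2 => by
    have hα₀ := hα.1
    have hsub : {ω | ∀ k, 1 ≤ k → k ≤ t + 2 → ω ∈ A.accurate k}ᶜ ⊆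
        {ω | ∀ k, 1 ≤ k → k ≤ t + 1 → ω ∈ A.accurate k}ᶜ ∪
          (A.accurate (t + 1) ∩ (A.accurate (t + 2))ᶜ) := by
      intro ω hω
      by_cases hle : ∀ k, 1 ≤ k → k ≤ t + 1 → ω ∈ A.accurate k
      · refine Or.inr ⟨hle (t + 1) (by omega) le_rfl, fun hacc => hω fun k hk hkt => ?_⟩
        rcases Nat.lt_or_eq_of_le hkt with hlt | rfl
        · exact hle k hk (by omega)
        · exact hacc
      · exact Or.inl hle
    calc _ ≤ _ := measure_mono hsub
      _ ≤ _ := measure_union_le _ _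
      _ ≤ ENNReal.ofReal (α / 2 - α / 2 ^ (t + 2)) + ENNReal.ofReal (α / 2 ^ (t + 3)) :=
        add_le_add (measure_compl_forall_accurate_le hε hα (t + 1))
          (A.measure_accurate_inter_compl_accurate_succ_le hε hα (by omega))
      _ = _ := by
        rw [← ENNReal.ofReal_add _ (by positivity)]
        · congr 1; field_simp; ring
        · rw [sub_nonneg]
          exact div_le_div_of_nonneg_left hα₀.le two_pos
            (le_self_pow₀ one_le_two (by omega))

end Algo

theorem statement0_general {S : Type*} [MeasurableSpace S] [MeasurableSingletonClass S]
    (C : Chain S)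
    (i : S) (ε α : ℝ) (hε : ε ∈ Set.Ioo (0 : ℝ) 1) (hα : α ∈ Set.Ioo (0 : ℝ) 1)
    {Ω : Type*} [MeasurableSpace Ω] (A : Algo C i ε α Ω)
    (t : ℕ) :
    1 - α ≤ (A.vol {ω | ∀ k, 1 ≤ k → k ≤ t →
      A.That k ω ∈ Set.Icc ((1 - ε) * C.EThat i (2 ^ k)) ((1 + ε) * C.EThat i (2 ^ k))}).toReal := by
  have := A.isProb
  have hα₀ := hα.1
  show 1 - α ≤ A.vol.real {ω | ∀ k, 1 ≤ k → k ≤ t → ω ∈ A.accurate k}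
  set E := {ω | ∀ k, 1 ≤ k → k ≤ t → ω ∈ A.accurate k}
  have hcompl : A.vol.real Eᶜ ≤ α := by
    refine ENNReal.toReal_le_of_le_ofReal hα₀.le
      ((A.measure_compl_forall_accurate_le hε hα t).trans (ENNReal.ofReal_le_ofReal ?_))
    have : 0 < α / 2 ^ (t + 1) := by positivity
    linarith
  have hunion := measureReal_union_le (μ := A.vol) E Eᶜ
  rw [union_compl_self, probReal_univ] at hunion
  linarith

/-- Lemma 3 of the paper. For every iteration index `t ≥ 1`, with
probability at least `1 − α` over the algorithm's randomness, simultaneously for all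
`k = 1, …, t` the estimate `T̂_i^{(k)}` lies within a `(1 ± ε)` multiplicative interval
around `E_i[min(T_i, θ^{(k)})]`. -/
theorem statement0 {S : Type*} [MeasurableSpace S] [MeasurableSingletonClass S] [Countable S]
    (C : Chain S) (hirr : C.Irreducible) (hrec : C.PositiveRecurrent)
    (i : S) (ε α : ℝ) (hε : ε ∈ Set.Ioo (0 : ℝ) 1) (hα : α ∈ Set.Ioo (0 : ℝ) 1)
    {Ω : Type*} [MeasurableSpace Ω] (A : Algo C i ε α Ω)
    (t : ℕ) (ht : 1 ≤ t) :
    1 - α ≤ (A.vol {ω | ∀ k, 1 ≤ k → k ≤ t →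
      A.That k ω ∈ Set.Icc ((1 - ε) * C.EThat i (2 ^ k)) ((1 + ε) * C.EThat i (2 ^ k))}).toReal :=
  statement0_general C i ε α hε hα A t

end

end LocalStationary
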